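/- A real Banach space X (dim ≥ 1) is rotund if and only if for every pair x₁, x₂ ∈ S_X, the generalized diameter r(Q_{S_X}(x₁), Q_{S_X}(x₂)) = sup{‖u−v‖ : u ∈ Q_{S_X}(x₁), v ∈ Q_{S_X}(x₂)} equals ‖x₁ − x₂‖. -/
import Mathlib


/-- The set of farthest points of the unit sphere from `x`,
using `r(S_X, x) = 1 + ‖x‖`. -/
def QS0 {X : Type*} [NormedAddCommGroup X] (x : X) : Set X :=
  {y | ‖y‖ = 1 ∧ ‖x - y‖ = 1 + ‖x‖}

/-- Generalized diameter of a pair of sets. -/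
noncomputable def genDiam {X : Type*} [NormedAddCommGroup X] (A B : Set X) : ℝ :=
  sSup {d | ∃ a ∈ A, ∃ b ∈ B, d = ‖a - b‖}

theorem stmt14 {X : Type*} [NormedAddCommGroup X] [NormedSpace ℝ X] [CompleteSpace X]
    [Nontrivial X] :
    (∀ x₁ x₂ : X, ‖x₁‖ = 1 → ‖x₂‖ = 1 → x₁ ≠ x₂ → ‖(1 / 2 : ℝ) • (x₁ + x₂)‖ < 1) ↔
      ∀ x₁ x₂ : X, ‖x₁‖ = 1 → ‖x₂‖ = 1 →
        genDiam (QS0 x₁) (QS0 x₂) = ‖x₁ - x₂‖ := by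
  constructor
  · intro hrot x₁ x₂ h₁ h₂
    have hQ : ∀ x : X, ‖x‖ = 1 → QS0 x = {-x} := by
      intro x hx
      ext y
      simp only [QS0, Set.mem_setOf_eq, Set.mem_singleton_iff]
      constructor
      · rintro ⟨hy, hxy⟩
        by_contra hne
        have hne' : x ≠ -y := by
          intro h
          exact hne (by rw [h, neg_neg])
        have hlt := hrot x (-y) hx (by rw [norm_neg, hy]) hne'
        have : ‖(1 / 2 : ℝ) • (x + -y)‖ = 1 := by
          rw [norm_smul]
          have : x + -y = x - y := by abel
          rw [this, hxy, hx]
          norm_num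
        linarith
      · rintro rfl
        refine ⟨by rw [norm_neg, hx], ?_⟩
        have hxx : x - -x = (2 : ℝ) • x := by
          rw [two_smul]; abel
        rw [hxx, norm_smul, hx]
        norm_num
    rw [hQ x₁ h₁, hQ x₂ h₂]
    have hset : {d | ∃ a ∈ ({-x₁} : Set X), ∃ b ∈ ({-x₂} : Set X), d = ‖a - b‖}
        = {‖x₁ - x₂‖} := by
      ext d
      simp only [Set.mem_setOf_eq, Set.mem_singleton_iff]
      constructor
      · rintro ⟨a, rfl, b, rfl, rfl⟩
        rw [show -x₁ - -x₂ = -(x₁ - x₂) by abel, norm_neg]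
      · rintro rfl
        exact ⟨-x₁, rfl, -x₂, rfl, by rw [show -x₁ - -x₂ = -(x₁ - x₂) by abel, norm_neg]⟩
    rw [genDiam, hset, csSup_singleton]
  · intro hdiam x₁ x₂ h₁ h₂ hne
    by_contra hlt
    push_neg at hlt
    set m : X := (1 / 2 : ℝ) • (x₁ + x₂) with hm_def
    have hmle : ‖m‖ ≤ 1 := by
      rw [hm_def, norm_smul]
      calc |(1/2 : ℝ)| * ‖x₁ + x₂‖ ≤ (1/2) * (‖x₁‖ + ‖x₂‖) := by
            rw [abs_of_pos (by norm_num : (0:ℝ) < 1/2)]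
            have := norm_add_le x₁ x₂
            linarith
        _ = 1 := by rw [h₁, h₂]; norm_num
    have hm : ‖m‖ = 1 := le_antisymm hmle hlt
    have h2m : m + m = x₁ + x₂ := by
      rw [hm_def, ← two_smul ℝ, smul_smul]
      norm_num
    have hsum4 : ‖(m + x₁) + (m + x₂)‖ = 4 := by
      have : (m + x₁) + (m + x₂) = (2 : ℝ) • (x₁ + x₂) := by
        rw [two_smul]
        calc (m + x₁) + (m + x₂) = (m + m) + (x₁ + x₂) := by abel
          _ = (x₁ + x₂) + (x₁ + x₂) := by rw [h2m]
      rw [this, norm_smul, show ‖x₁ + x₂‖ = 2 by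
        have := congrArg norm h2m
        rw [← two_smul ℝ, norm_smul, hm] at this
        simpa using this.symm]
      norm_num
    have hA1 : ‖m + x₁‖ = 2 := by
      have hle : ‖m + x₁‖ ≤ 2 := by
        have := norm_add_le m x₁; rw [hm, h₁] at this; linarith
      have hle2 : ‖m + x₂‖ ≤ 2 := by
        have := norm_add_le m x₂; rw [hm, h₂] at this; linarith
      have := norm_add_le (m + x₁) (m + x₂)
      rw [hsum4] at this
      linarith
    have hA2 : ‖m + x₂‖ = 2 := by
      have hle : ‖m + x₂‖ ≤ 2 := by
        have := norm_add_le m x₂; rw [hm, h₂] at this; linarith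
      have := norm_add_le (m + x₁) (m + x₂)
      rw [hsum4] at this
      linarith
    have hmem1 : -x₁ ∈ QS0 m := by
      refine ⟨by rw [norm_neg, h₁], ?_⟩
      rw [show m - -x₁ = m + x₁ by abel, hA1, hm]
      norm_num
    have hmem2 : -x₂ ∈ QS0 m := by
      refine ⟨by rw [norm_neg, h₂], ?_⟩
      rw [show m - -x₂ = m + x₂ by abel, hA2, hm]
      norm_num
    have hzero : genDiam (QS0 m) (QS0 m) = 0 := by
      rw [hdiam m m hm hm, sub_self, norm_zero]
    have hbdd : BddAbove {d | ∃ a ∈ QS0 m, ∃ b ∈ QS0 m, d = ‖a - b‖} := by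
      refine ⟨2, ?_⟩
      rintro d ⟨a, ha, b, hb, rfl⟩
      have := norm_sub_le a b
      rw [ha.1, hb.1] at this
      linarith
    have hmemd : ‖-x₁ - -x₂‖ ∈ {d | ∃ a ∈ QS0 m, ∃ b ∈ QS0 m, d = ‖a - b‖} :=
      ⟨-x₁, hmem1, -x₂, hmem2, rfl⟩
    have hle := le_csSup hbdd hmemd
    rw [show ((sSup {d | ∃ a ∈ QS0 m, ∃ b ∈ QS0 m, d = ‖a - b‖}) = genDiam (QS0 m) (QS0 m)) from rfl, hzero] at hle
    have hpos : 0 < ‖-x₁ - -x₂‖ := by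
      rw [norm_pos_iff]
      intro h
      apply hne
      have h' : x₂ - x₁ = 0 := by rw [show -x₁ - -x₂ = x₂ - x₁ by abel] at h; exact h
      exact (sub_eq_zero.mp h').symm
    linarith
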